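/- Let S be a pomonoid and e ∈ S an idempotent (e² = e). If s, t ∈ S are connected by chains: there exist s₁,…,sₙ, t₁,…,tₘ ∈ S with s ≤ c₁s₁, d₁s₁ ≤ c₂s₂, …, dₙsₙ ≤ t and t ≤ p₁t₁, q₁t₁ ≤ p₂t₂, …, qₘtₘ ≤ s, where each pair (cᵢ,dᵢ) and (pⱼ,qⱼ) equals (1,e), then es = et. (In other words, the monocyclic S-poset congruence ν(1,e) on S is contained in the kernel of left translation by e.) -/
import Mathlib


/-- A chain `a ≤ 1·w₁, e·w₁ ≤ 1·w₂, …, e·wₙ ≤ b` in a pomonoid,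
all pairs equal `(1, e)`. -/
def Chain1e {S : Type} [Monoid S] [PartialOrder S] (e a b : S) : Prop :=
  ∃ n : ℕ, ∃ w : Fin (n + 1) → S,
    a ≤ 1 * w 0 ∧
    (∀ i : Fin n, e * w i.castSucc ≤ 1 * w i.succ) ∧
    e * w (Fin.last n) ≤ b

lemma chain1e_le {S : Type} [Monoid S] [PartialOrder S]
    [CovariantClass S S (· * ·) (· ≤ ·)]
    (e : S) (he : e * e = e) (a b : S) (h : Chain1e e a b) :
    e * a ≤ e * b := by
  obtain ⟨n, w, h0, hstep, hlast⟩ := h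
  have key : ∀ k : ℕ, ∀ hk : k < n + 1, e * w 0 ≤ e * w ⟨k, hk⟩ := by
    intro k
    induction k with
    | zero => intro hk; exact le_refl _
    | succ m ih =>
      intro hk
      have hm : m < n := Nat.lt_of_succ_lt_succ hk
      have h1 := ih (Nat.lt_of_lt_of_le hm (Nat.le_succ n))
      have h2 := hstep ⟨m, hm⟩
      simp only [one_mul] at h2
      calc e * w 0 ≤ e * w ⟨m, _⟩ := h1
        _ = e * (e * w ⟨m, _⟩) := by rw [← mul_assoc, he]
        _ ≤ e * w ⟨m + 1, hk⟩ := by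
            refine mul_le_mul_right (le_of_le_of_eq h2 ?_) e
            congr 1
  have ha : e * a ≤ e * w 0 := by
    have := mul_le_mul_right h0 e
    simpa using this
  have hb : e * w (Fin.last n) ≤ e * b := by
    calc e * w (Fin.last n) = e * (e * w (Fin.last n)) := by rw [← mul_assoc, he]
      _ ≤ e * b := mul_le_mul_right hlast e
  exact le_trans ha (le_trans (key n (Nat.lt_succ_self n)) hb)

/-- if `e` is idempotent and `s, t` are connected by `(1,e)`-chains
in both directions, then `es = et`; i.e. `ν(1,e) ⊆ ker λ_e`. -/
theorem nu_one_e_subset_ker_lambda_e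
    {S : Type} [Monoid S] [PartialOrder S]
    [CovariantClass S S (· * ·) (· ≤ ·)]
    [CovariantClass S S (Function.swap (· * ·)) (· ≤ ·)]
    (e : S) (he : e * e = e) (s t : S)
    (h : Chain1e e s t ∧ Chain1e e t s) :
    e * s = e * t := by
  exact le_antisymm (chain1e_le e he s t h.1) (chain1e_le e he t s h.2)
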